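/- arXiv:1005.0486 — 3 statements merged into one kernel-verified Lean document; each statement's English description precedes it below -/
import Mathlib

section
/- Let b₀, b₁ be C² functions of z on an interval with b₁ ≥ ε₀ > 0, and suppose for a parameter r the function z ↦ b₀(z) + r b₁(z) has exactly two simple zeros z⁻ < z⁺ between which it is negative, with (b₀ + rb₁)' nonvanishing at z^±. Define η(r) = ∫_{z⁻(r)}^{z⁺(r)} (-b₀(z) - r b₁(z))^{1/2} dz. Then η is differentiable in r and η'(r) = -½ ∫_{z⁻}^{z⁺} b₁(z)·(-b₀(z) - rb₁(z))^{-1/2} dz; in particular -η'(r) equals half the 'period' integral ∫ b₁ (-b₀-rb₁)^{-1/2} dz, and η is strictly decreasing in r. -/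
/-!
Since `√` is `0` on negative reals, for `s` near `r` the action is an integral over the fixed
interval `[A, B]`: with `u = -(b₀ + r b₁)` it is `∫_A^B √(u - (s - r) b₁)`. Simple zeros make `u`
grow at least linearly in the distance to the turning points, positively inside and negatively
outside. Put `h = |s - r|` and cut out windows of radius `δ = h^(3/4)` around the turning points.
Beyond the windows the integrand vanishes for both parameters. On the windows the Taylor remainder
of `√` is `O(√h + h u^(-1/2))`, and `u^(-1/2)` is integrable, so its integral over shrinking
windows tends to `0`. Between the windows `u ≥ c δ ≫ h`, and the remainder is `O(h² / δ) u^(-1/2)`.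
Every contribution is `o(h)`. Since `b₁ > 0`, the period integral is positive and `η` decreases.
-/

open Set Filter Topology MeasureTheory

lemma Real.abs_sqrt_sub_sqrt_le (a b : ℝ) : |√a - √b| ≤ √|a - b| := by
  wlog hba : b ≤ a generalizing a b
  · rw [abs_sub_comm, abs_sub_comm a]; exact this b a (le_of_not_ge hba)
  have hsq : √b ≤ √a := Real.sqrt_le_sqrt hba
  rw [abs_of_nonneg (sub_nonneg.2 hsq), abs_of_nonneg (sub_nonneg.2 hba)]
  refine Real.le_sqrt_of_sq_le ?_
  rcases le_total b 0 with hb | hb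
  · rw [Real.sqrt_eq_zero'.2 hb, sub_zero]
    calc √a ^ 2 ≤ max a 0 := by
          rcases le_total a 0 with ha | ha
          · simp [Real.sqrt_eq_zero'.2 ha]
          · rw [Real.sq_sqrt ha]; exact le_max_left _ _
      _ ≤ a - b := max_le (by linarith) (by linarith)
  · nlinarith [Real.sq_sqrt hb, Real.sq_sqrt (hb.trans hba), Real.sqrt_nonneg b]

noncomputable def sqrtTaylorRemainder (a x : ℝ) : ℝ := √(a - x) - √a + x / (2 * √a)

lemma sqrtTaylorRemainder_eq_zero {a x : ℝ} (h : a ≤ -|x|) : sqrtTaylorRemainder a x = 0 := by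
  have ha : a ≤ 0 := h.trans (neg_nonpos.2 (abs_nonneg x))
  have hax : a - x ≤ 0 := by linarith [neg_abs_le x]
  simp [sqrtTaylorRemainder, Real.sqrt_eq_zero'.2 ha, Real.sqrt_eq_zero'.2 hax]

lemma abs_sqrtTaylorRemainder_le (a x : ℝ) :
    |sqrtTaylorRemainder a x| ≤ √|x| + |x| / 2 * (√a)⁻¹ := by
  have hdiff : |√(a - x) - √a| ≤ √|x| := by
    simpa [abs_sub_comm] using Real.abs_sqrt_sub_sqrt_le (a - x) a
  have hlin : |x / (2 * √a)| = |x| / 2 * (√a)⁻¹ := by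
    rw [abs_div, abs_mul, abs_two, abs_of_nonneg (Real.sqrt_nonneg a)]; ring
  unfold sqrtTaylorRemainder
  exact (abs_add_le _ _).trans (by rw [hlin]; gcongr)

lemma abs_sqrtTaylorRemainder_le_of_abs_le {a x : ℝ} (ha : 0 < a) (hx : |x| ≤ a / 2) :
    |sqrtTaylorRemainder a x| ≤ x ^ 2 / a * (√a)⁻¹ := by
  have hs : 0 < √a := Real.sqrt_pos.2 ha
  have hax : 0 ≤ a - x := by linarith [le_abs_self x]
  have hsum : 0 < √(a - x) + √a := by positivity
  have hsq : (√(a - x) - √a) * (√(a - x) + √a) = -x := by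
    nlinarith [Real.sq_sqrt hax, Real.sq_sqrt ha.le]
  -- rationalising: the remainder is `-x² / (2√a (√(a-x) + √a)²)`
  have hR : sqrtTaylorRemainder a x = -x ^ 2 / (2 * √a * (√(a - x) + √a) ^ 2) := by
    unfold sqrtTaylorRemainder
    field_simp
    linear_combination (2 * √a * (√(a - x) + √a) + x) * hsq
  have hden : a * √a ≤ 2 * √a * (√(a - x) + √a) ^ 2 := by
    nlinarith [Real.sq_sqrt ha.le, Real.sqrt_nonneg (a - x), mul_pos hs hs]
  rw [hR, abs_div, abs_neg, abs_of_nonneg (sq_nonneg x), abs_of_pos (by positivity)]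
  calc x ^ 2 / (2 * √a * (√(a - x) + √a) ^ 2) ≤ x ^ 2 / (a * √a) :=
        div_le_div_of_nonneg_left (sq_nonneg x) (by positivity) hden
    _ = x ^ 2 / a * (√a)⁻¹ := by rw [div_mul_eq_div_div, div_eq_mul_inv]

lemma sqrtTaylorRemainder_mul_eq (a t w : ℝ) :
    sqrtTaylorRemainder a (t * w) = √(a - t * w) - √a + t / 2 * (w / √a) := by
  unfold sqrtTaylorRemainder; ring

lemma intervalIntegrable_inv_sqrt (a b : ℝ) :
    IntervalIntegrable (fun x => (√x)⁻¹) volume a b := by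
  refine (intervalIntegral.intervalIntegrable_rpow' (r := -(1 / 2)) (by norm_num)).norm.mono_fun'
    (by fun_prop) (Eventually.of_forall fun x => ?_)
  dsimp only
  rcases le_or_gt x 0 with hx | hx
  · simp [Real.sqrt_eq_zero'.2 hx]
  · rw [Real.norm_eq_abs, abs_of_nonneg (inv_nonneg.2 (Real.sqrt_nonneg x)),
      Real.rpow_neg hx.le, ← Real.sqrt_eq_rpow, Real.norm_eq_abs, abs_of_pos (by positivity)]

lemma hasDerivAt_of_abs_sub_le {f Φ : ℝ → ℝ} {f' x : ℝ} (hΦ : Tendsto Φ (𝓝 x) (𝓝 0))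
    (h : ∀ᶠ y in 𝓝[≠] x, |f y - f x - (y - x) * f'| ≤ |y - x| * Φ y) : HasDerivAt f f' x := by
  rw [hasDerivAt_iff_isLittleO, Asymptotics.isLittleO_iff]
  intro κ hκ
  filter_upwards [eventually_nhdsWithin_iff.1 h, hΦ.eventually (gt_mem_nhds hκ)]
    with y hy hΦy
  rcases eq_or_ne y x with rfl | hne
  · simp
  simp only [Real.norm_eq_abs, smul_eq_mul]
  exact (hy hne).trans (by rw [mul_comm κ]; gcongr)

lemma IntervalIntegrable.mono_Icc {f : ℝ → ℝ} {A B a b : ℝ} (hf : IntervalIntegrable f volume A B)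
    (hAa : A ≤ a) (hab : a ≤ b) (hbB : b ≤ B) : IntervalIntegrable f volume a b :=
  hf.mono_set (by
    rw [uIcc_of_le hab, uIcc_of_le (hAa.trans (hab.trans hbB))]; exact Icc_subset_Icc hAa hbB)

lemma IntervalIntegrable.tendsto_integral_sub_add {g : ℝ → ℝ} {A B x : ℝ}
    (hg : IntervalIntegrable g volume A B) (hx : x ∈ Ioo A B) :
    Tendsto (fun δ => ∫ z in (x - δ)..(x + δ), g z) (𝓝 0) (𝓝 0) := by
  have hAB : A ≤ B := hx.1.le.trans hx.2.le
  set F := fun y => ∫ z in A..y, g z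
  have hF : ContinuousAt F x := by
    refine (intervalIntegral.continuousOn_primitive_interval' hg left_mem_uIcc).continuousAt ?_
    rw [uIcc_of_le hAB]; exact Icc_mem_nhds hx.1 hx.2
  have hlim : Tendsto (fun δ => F (x + δ) - F (x - δ)) (𝓝 0) (𝓝 0) := by
    have h₂ := (continuous_const_add x).tendsto' 0 x (add_zero x)
    have h₁ := (continuous_sub_left x).tendsto' 0 x (sub_zero x)
    simpa using (hF.tendsto.comp h₂).sub (hF.tendsto.comp h₁)
  refine hlim.congr' ?_
  have hsub : ∀ᶠ δ in 𝓝 (0 : ℝ), x - δ ∈ Icc A B ∧ x + δ ∈ Icc A B := by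
    have hpos : 0 < min (x - A) (B - x) := lt_min (by linarith [hx.1]) (by linarith [hx.2])
    filter_upwards [Metric.ball_mem_nhds 0 hpos] with δ hδ
    rw [Metric.mem_ball, Real.dist_eq, sub_zero, abs_lt] at hδ
    have := min_le_left (x - A) (B - x)
    have := min_le_right (x - A) (B - x)
    constructor <;> constructor <;> linarith
  filter_upwards [hsub] with δ ⟨h₁, h₂⟩
  exact intervalIntegral.integral_interval_sub_left (hg.mono_Icc le_rfl h₂.1 h₂.2)
    (hg.mono_Icc le_rfl h₁.1 h₁.2)

lemma intervalIntegral.integral_eq_of_eq_zero_outside {f : ℝ → ℝ} {A a b B : ℝ}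
    (hAa : A ≤ a) (hab : a ≤ b) (hbB : b ≤ B) (hf : IntervalIntegrable f volume A B)
    (hleft : ∀ z ∈ Icc A a, f z = 0) (hright : ∀ z ∈ Icc b B, f z = 0) :
    ∫ z in a..b, f z = ∫ z in A..B, f z := by
  have hzero : ∀ c d, c ≤ d → (∀ z ∈ Icc c d, f z = 0) → ∫ z in c..d, f z = 0 := fun c d hcd h => by
    rw [intervalIntegral.integral_congr (g := fun _ => 0) (by rwa [uIcc_of_le hcd])]; simp
  rw [← intervalIntegral.integral_add_adjacent_intervals (hf.mono_Icc le_rfl hAa (hab.trans hbB))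
      (hf.mono_Icc hAa (hab.trans hbB) le_rfl),
    ← intervalIntegral.integral_add_adjacent_intervals (hf.mono_Icc hAa hab hbB)
      (hf.mono_Icc (hAa.trans hab) hbB le_rfl),
    hzero A a hAa hleft, hzero b B hbB hright]
  ring

lemma HasDerivAt.exists_mul_abs_sub_le_abs {f : ℝ → ℝ} {d x : ℝ} (hf : HasDerivAt f d x)
    (hd : d ≠ 0) : ∃ δ > 0, ∀ z, |z - x| < δ → |d| / 2 * |z - x| ≤ |f z - f x| := by
  have hlin := (hasDerivAt_iff_isLittleO.1 hf).def (c := |d| / 2) (by positivity)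
  obtain ⟨δ, hδ, hball⟩ := Metric.eventually_nhds_iff.1 hlin
  refine ⟨δ, hδ, fun z hz => ?_⟩
  have h := hball (by rwa [Real.dist_eq])
  simp only [Real.norm_eq_abs, smul_eq_mul] at h
  have htri := abs_sub_abs_le_abs_sub ((z - x) * d) (f z - f x)
  rw [abs_mul, abs_sub_comm ((z - x) * d)] at htri
  nlinarith

lemma exists_mul_abs_min_le_abs {f : ℝ → ℝ} {A B p q dp dq : ℝ} (hf : Continuous f)
    (hAp : A < p) (hpq : p < q) (hqB : q < B) (hp : HasDerivAt f dp p) (hq : HasDerivAt f dq q)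
    (hdp : dp ≠ 0) (hdq : dq ≠ 0) (hfp : f p = 0) (hfq : f q = 0)
    (hne : ∀ z ∈ Icc A B, z ≠ p → z ≠ q → f z ≠ 0) :
    ∃ c > 0, ∀ z ∈ Icc A B, c * |min (z - p) (q - z)| ≤ |f z| := by
  obtain ⟨δp, hδp, hnear_p⟩ := hp.exists_mul_abs_sub_le_abs hdp
  obtain ⟨δq, hδq, hnear_q⟩ := hq.exists_mul_abs_sub_le_abs hdq
  set S := Icc A B ∩ {z | δp ≤ |z - p|} ∩ {z | δq ≤ |z - q|}
  have hS : IsCompact S :=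
    (isCompact_Icc.inter_right (isClosed_le continuous_const (by fun_prop))).inter_right
      (isClosed_le continuous_const (by fun_prop))
  obtain ⟨m, hm, hfar⟩ := hS.exists_forall_le' hf.abs.continuousOn (a := 0) fun z hz =>
    abs_pos.2 <| hne z hz.1.1
      (fun h => by have h' : δp ≤ |z - p| := hz.1.2; rw [h, sub_self, abs_zero] at h'; linarith)
      (fun h => by have h' : δq ≤ |z - q| := hz.2; rw [h, sub_self, abs_zero] at h'; linarith)
  have hBA : 0 < B - A := by linarith
  refine ⟨min (min (|dp| / 2) (|dq| / 2)) (m / (B - A)),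
    lt_min (lt_min (half_pos (abs_pos.2 hdp)) (half_pos (abs_pos.2 hdq))) (div_pos hm hBA),
    fun z hz => ?_⟩
  have hmin_p : |min (z - p) (q - z)| ≤ |z - p| := by
    rw [abs_le]; constructor
    · exact le_min (neg_abs_le _) (by linarith [le_abs_self (z - p)])
    · exact (min_le_left _ _).trans (le_abs_self _)
  have hmin_q : |min (z - p) (q - z)| ≤ |z - q| := by
    rw [abs_le, abs_sub_comm]; constructor
    · exact le_min (by linarith [le_abs_self (q - z)]) (neg_abs_le _)
    · exact (min_le_right _ _).trans (le_abs_self _)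
  by_cases hzp : |z - p| < δp
  · calc _ ≤ |dp| / 2 * |z - p| :=
          mul_le_mul ((min_le_left _ _).trans (min_le_left _ _)) hmin_p (abs_nonneg _)
            (by positivity)
      _ ≤ |f z| := by simpa [hfp] using hnear_p z hzp
  by_cases hzq : |z - q| < δq
  · calc _ ≤ |dq| / 2 * |z - q| :=
          mul_le_mul ((min_le_left _ _).trans (min_le_right _ _)) hmin_q (abs_nonneg _)
            (by positivity)
      _ ≤ |f z| := by simpa [hfq] using hnear_q z hzq
  have hlen : |min (z - p) (q - z)| ≤ B - A :=
    hmin_p.trans (abs_sub_le_iff.2 ⟨by linarith [hz.2], by linarith [hz.1]⟩)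
  calc _ ≤ m / (B - A) * (B - A) :=
        mul_le_mul (min_le_right _ _) hlen (abs_nonneg _) (div_pos hm hBA).le
    _ = m := div_mul_cancel₀ m hBA.ne'
    _ ≤ |f z| := hfar z ⟨⟨hz, not_lt.1 hzp⟩, not_lt.1 hzq⟩

lemma min_sub_sub_nonpos {p q z : ℝ} (hz : z ∉ Ioo p q) : min (z - p) (q - z) ≤ 0 := by
  by_contra! h
  exact hz ⟨by linarith [min_le_left (z - p) (q - z)], by linarith [min_le_right (z - p) (q - z)]⟩

/-- `u` plays the role of the depth `-(b₀ + r b₁)` of the well. Since `min (z - p) (q - z)` is the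
signed distance from `z` to the complement of `(p, q)`, the last two fields say that `u` grows at
least linearly away from the turning points, positively inside `(p, q)` and negatively outside. -/
structure NondegenerateWell (u : ℝ → ℝ) (A B p q c : ℝ) : Prop where
  left_lt : A < p
  lt : p < q
  lt_right : q < B
  slope_pos : 0 < c
  le_of_mem : ∀ z ∈ Ioo p q, c * min (z - p) (q - z) ≤ u z
  le_of_notMem : ∀ z ∈ Icc A B, z ∉ Ioo p q → u z ≤ c * min (z - p) (q - z)

namespace NondegenerateWell

variable {u w : ℝ → ℝ} {A B p q c : ℝ}

lemma nonpos_of_notMem (hW : NondegenerateWell u A B p q c) {z : ℝ} (hz : z ∈ Icc A B)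
    (hzpq : z ∉ Ioo p q) : u z ≤ 0 :=
  (hW.le_of_notMem z hz hzpq).trans
    (mul_nonpos_of_nonneg_of_nonpos hW.slope_pos.le (min_sub_sub_nonpos hzpq))

lemma pos_of_mem (hW : NondegenerateWell u A B p q c) {z : ℝ} (hz : z ∈ Ioo p q) : 0 < u z :=
  (mul_pos hW.slope_pos (lt_min (by linarith [hz.1]) (by linarith [hz.2]))).trans_le
    (hW.le_of_mem z hz)

lemma le_neg_mul_of_notMem (hW : NondegenerateWell u A B p q c) {δ z : ℝ} (hδ : 0 ≤ δ)
    (hz : z ∈ Icc A B) (hzδ : z ∉ Ioo (p - δ) (q + δ)) : u z ≤ -(c * δ) := by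
  have hzpq : z ∉ Ioo p q := fun h => hzδ ⟨by linarith [h.1], by linarith [h.2]⟩
  refine (hW.le_of_notMem z hz hzpq).trans ?_
  rw [← mul_neg]
  refine mul_le_mul_of_nonneg_left ?_ hW.slope_pos.le
  rcases le_or_gt z (p - δ) with h | h
  · linarith [min_le_left (z - p) (q - z)]
  · have : q + δ ≤ z := by by_contra! h'; exact hzδ ⟨h, h'⟩
    linarith [min_le_right (z - p) (q - z)]

lemma mul_le_of_mem (hW : NondegenerateWell u A B p q c) {δ z : ℝ} (hδ : 0 < δ)
    (hz : z ∈ Icc (p + δ) (q - δ)) : c * δ ≤ u z :=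
  le_trans (mul_le_mul_of_nonneg_left (le_min (by linarith [hz.1]) (by linarith [hz.2]))
    hW.slope_pos.le) (hW.le_of_mem z ⟨by linarith [hz.1], by linarith [hz.2]⟩)

lemma inv_sqrt_le (hW : NondegenerateWell u A B p q c) {z : ℝ} (hz : z ∈ Icc A B) :
    (√(u z))⁻¹ ≤ (√c)⁻¹ * ((√(z - p))⁻¹ + (√(q - z))⁻¹) := by
  have hrhs : 0 ≤ (√c)⁻¹ * ((√(z - p))⁻¹ + (√(q - z))⁻¹) := by positivity
  by_cases hzpq : z ∈ Ioo p q
  · have hmin : 0 < min (z - p) (q - z) := lt_min (by linarith [hzpq.1]) (by linarith [hzpq.2])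
    have hle := hW.le_of_mem z hzpq
    calc (√(u z))⁻¹ ≤ (√(c * min (z - p) (q - z)))⁻¹ :=
          inv_anti₀ (Real.sqrt_pos.2 (mul_pos hW.slope_pos hmin)) (Real.sqrt_le_sqrt hle)
      _ = (√c)⁻¹ * (√(min (z - p) (q - z)))⁻¹ := by rw [Real.sqrt_mul hW.slope_pos.le, mul_inv]
      _ ≤ (√c)⁻¹ * ((√(z - p))⁻¹ + (√(q - z))⁻¹) := by
          gcongr
          rcases min_choice (z - p) (q - z) with h | h <;> rw [h]
          · exact le_add_of_nonneg_right (by positivity)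
          · exact le_add_of_nonneg_left (by positivity)
  · rw [Real.sqrt_eq_zero'.2 (hW.nonpos_of_notMem hz hzpq), inv_zero]
    exact hrhs

lemma intervalIntegrable_inv_sqrt (hW : NondegenerateWell u A B p q c) (hu : Continuous u) :
    IntervalIntegrable (fun z => (√(u z))⁻¹) volume A B := by
  have hdom : IntervalIntegrable (fun z => (√c)⁻¹ * ((√(z - p))⁻¹ + (√(q - z))⁻¹)) volume A B := by
    refine IntervalIntegrable.const_mul (IntervalIntegrable.add ?_ ?_) _
    · simpa using (_root_.intervalIntegrable_inv_sqrt (A - p) (B - p)).comp_sub_right p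
    · simpa using (_root_.intervalIntegrable_inv_sqrt (q - A) (q - B)).comp_sub_left q
  refine hdom.mono_fun' (by fun_prop) ?_
  rw [EventuallyLE, ae_restrict_iff' measurableSet_uIoc]
  refine Eventually.of_forall fun z hz => ?_
  have hz' : z ∈ Icc A B := by
    have := uIoc_subset_uIcc hz
    rwa [uIcc_of_le (hW.left_lt.trans (hW.lt.trans hW.lt_right)).le] at this
  rw [Real.norm_eq_abs, abs_of_nonneg (by positivity)]
  exact hW.inv_sqrt_le hz'

lemma intervalIntegrable_div_sqrt (hW : NondegenerateWell u A B p q c) (hu : Continuous u)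
    (hw : Continuous w) : IntervalIntegrable (fun z => w z / √(u z)) volume A B := by
  simpa only [div_eq_mul_inv] using
    (hW.intervalIntegrable_inv_sqrt hu).continuousOn_mul hw.continuousOn

lemma integral_eq_of_nonpos_imp_eq_zero (hW : NondegenerateWell u A B p q c) {g : ℝ → ℝ}
    (hg : IntervalIntegrable g volume A B) (hzero : ∀ z, u z ≤ 0 → g z = 0) :
    ∫ z in p..q, g z = ∫ z in A..B, g z := by
  refine intervalIntegral.integral_eq_of_eq_zero_outside hW.left_lt.le hW.lt.le hW.lt_right.le hg
    (fun z hz => hzero z (hW.nonpos_of_notMem ?_ ?_))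
    (fun z hz => hzero z (hW.nonpos_of_notMem ?_ ?_))
  · exact ⟨hz.1, hz.2.trans (hW.lt.trans hW.lt_right).le⟩
  · exact fun h => by linarith [h.1, hz.2]
  · exact ⟨(hW.left_lt.trans hW.lt).le.trans hz.1, hz.2⟩
  · exact fun h => by linarith [h.2, hz.1]

lemma integral_div_sqrt_eq (hW : NondegenerateWell u A B p q c) (hu : Continuous u)
    (hw : Continuous w) : ∫ z in p..q, w z / √(u z) = ∫ z in A..B, w z / √(u z) :=
  hW.integral_eq_of_nonpos_imp_eq_zero (hW.intervalIntegrable_div_sqrt hu hw) fun z hz => by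
    rw [Real.sqrt_eq_zero'.2 hz, div_zero]

lemma integral_div_sqrt_pos (hW : NondegenerateWell u A B p q c) (hu : Continuous u)
    (hw : Continuous w) (hwpos : ∀ z ∈ Ioo p q, 0 < w z) : 0 < ∫ z in p..q, w z / √(u z) :=
  intervalIntegral.intervalIntegral_pos_of_pos_on
    ((hW.intervalIntegrable_div_sqrt hu hw).mono_Icc hW.left_lt.le hW.lt.le hW.lt_right.le)
    (fun z hz => div_pos (hwpos z hz) (Real.sqrt_pos.2 (hW.pos_of_mem hz))) hW.lt

lemma of_simple_zeros {f : ℝ → ℝ} {dp dq : ℝ} (hf : Continuous f)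
    (hAp : A < p) (hpq : p < q) (hqB : q < B) (hp : HasDerivAt f dp p) (hq : HasDerivAt f dq q)
    (hdp : dp ≠ 0) (hdq : dq ≠ 0) (hfp : f p = 0) (hfq : f q = 0)
    (hneg : ∀ z ∈ Ioo p q, f z < 0) (hpos : ∀ z ∈ Icc A B, z ∉ Icc p q → 0 < f z) :
    ∃ c, NondegenerateWell (fun z => -f z) A B p q c := by
  have hnonneg : ∀ z ∈ Icc A B, z ∉ Ioo p q → 0 ≤ f z := fun z hz hzpq => by
    by_cases hz' : z ∈ Icc p q
    · rcases eq_or_lt_of_le hz'.1 with rfl | h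
      · exact hfp.ge
      rcases eq_or_lt_of_le hz'.2 with rfl | h'
      · exact hfq.ge
      exact absurd ⟨h, h'⟩ hzpq
    · exact (hpos z hz hz').le
  obtain ⟨c, hc, hbound⟩ := exists_mul_abs_min_le_abs hf hAp hpq hqB hp hq hdp hdq hfp hfq
    fun z hz hzp hzq => by
      by_cases hzpq : z ∈ Ioo p q
      · exact (hneg z hzpq).ne
      · exact (hpos z hz fun h => hzpq ⟨lt_of_le_of_ne h.1 (Ne.symm hzp),
          lt_of_le_of_ne h.2 hzq⟩).ne'
  refine ⟨c, hAp, hpq, hqB, hc, fun z hz => ?_, fun z hz hzpq => ?_⟩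
  · have := hbound z ⟨hAp.le.trans hz.1.le, hz.2.le.trans hqB.le⟩
    rw [abs_of_neg (hneg z hz)] at this
    exact (mul_le_mul_of_nonneg_left (le_abs_self _) hc.le).trans this
  · have := hbound z hz
    rw [abs_of_nonneg (hnonneg z hz hzpq), abs_of_nonpos (min_sub_sub_nonpos hzpq)] at this
    linarith

lemma integral_sqrtTaylorRemainder_eq (hW : NondegenerateWell u A B p q c) (hu : Continuous u)
    (hw : Continuous w) (t : ℝ) :
    ∫ z in A..B, sqrtTaylorRemainder (u z) (t * w z) =
      (∫ z in A..B, √(u z - t * w z)) - (∫ z in A..B, √(u z))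
        - t * (-(1 / 2) * ∫ z in p..q, w z / √(u z)) := by
  have ht : IntervalIntegrable (fun z => √(u z - t * w z)) volume A B :=
    (by fun_prop : Continuous fun z => √(u z - t * w z)).intervalIntegrable _ _
  have h₀ : IntervalIntegrable (fun z => √(u z)) volume A B :=
    (by fun_prop : Continuous fun z => √(u z)).intervalIntegrable _ _
  simp_rw [sqrtTaylorRemainder_mul_eq]
  rw [hW.integral_div_sqrt_eq hu hw,
    intervalIntegral.integral_add (ht.sub h₀) ((hW.intervalIntegrable_div_sqrt hu hw).const_mul _),
    intervalIntegral.integral_sub ht h₀, intervalIntegral.integral_const_mul]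
  ring

lemma abs_integral_sqrtTaylorRemainder_le (hW : NondegenerateWell u A B p q c) (hu : Continuous u)
    {t ε a b : ℝ} (hε : ∀ z ∈ Icc A B, |t * w z| ≤ ε) (hAa : A ≤ a) (hab : a ≤ b) (hbB : b ≤ B) :
    |∫ z in a..b, sqrtTaylorRemainder (u z) (t * w z)|
      ≤ (b - a) * √ε + ε / 2 * ∫ z in a..b, (√(u z))⁻¹ := by
  have hinv := (hW.intervalIntegrable_inv_sqrt hu).mono_Icc hAa hab hbB
  have hbound : ∀ z ∈ Icc A B,
      ‖sqrtTaylorRemainder (u z) (t * w z)‖ ≤ √ε + ε / 2 * (√(u z))⁻¹ := fun z hz =>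
    (abs_sqrtTaylorRemainder_le _ _).trans (by gcongr <;> exact hε z hz)
  have := intervalIntegral.norm_integral_le_of_norm_le hab
    (Eventually.of_forall fun z hz => hbound z ⟨hAa.trans hz.1.le, hz.2.trans hbB⟩)
    (intervalIntegrable_const.add (hinv.const_mul (ε / 2)))
  rwa [intervalIntegral.integral_add intervalIntegrable_const (hinv.const_mul _),
    intervalIntegral.integral_const, intervalIntegral.integral_const_mul, smul_eq_mul,
    Real.norm_eq_abs] at this

lemma abs_integral_sqrtTaylorRemainder_le_of_deep (hW : NondegenerateWell u A B p q c)
    (hu : Continuous u) {t ε δ : ℝ} (hε : ∀ z ∈ Icc A B, |t * w z| ≤ ε) (hδ : 0 < δ)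
    (hAδ : A ≤ p - δ) (hδpq : p + δ ≤ q - δ) (hδB : q + δ ≤ B) (hεδ : 2 * ε ≤ c * δ) :
    |∫ z in (p + δ)..(q - δ), sqrtTaylorRemainder (u z) (t * w z)|
      ≤ ε ^ 2 / (c * δ) * ∫ z in A..B, (√(u z))⁻¹ := by
  have hinv := hW.intervalIntegrable_inv_sqrt hu
  have hcδ : 0 < c * δ := mul_pos hW.slope_pos hδ
  have hbound : ∀ z ∈ Icc (p + δ) (q - δ),
      ‖sqrtTaylorRemainder (u z) (t * w z)‖ ≤ ε ^ 2 / (c * δ) * (√(u z))⁻¹ := fun z hz => by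
    have hz' : z ∈ Icc A B := ⟨by linarith [hz.1], by linarith [hz.2]⟩
    have hdeep := hW.mul_le_of_mem hδ hz
    have hx := hε z hz'
    refine (abs_sqrtTaylorRemainder_le_of_abs_le (hcδ.trans_le hdeep) (by linarith)).trans ?_
    have hsq : (t * w z) ^ 2 ≤ ε ^ 2 := by
      rw [← sq_abs]; exact pow_le_pow_left₀ (abs_nonneg _) hx 2
    gcongr
  rw [← Real.norm_eq_abs]
  calc ‖∫ z in (p + δ)..(q - δ), sqrtTaylorRemainder (u z) (t * w z)‖
      ≤ ∫ z in (p + δ)..(q - δ), ε ^ 2 / (c * δ) * (√(u z))⁻¹ :=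
        intervalIntegral.norm_integral_le_of_norm_le hδpq
          (Eventually.of_forall fun z hz => hbound z ⟨hz.1.le, hz.2⟩)
          ((hinv.mono_Icc (by linarith) hδpq (by linarith)).const_mul _)
    _ ≤ ε ^ 2 / (c * δ) * ∫ z in A..B, (√(u z))⁻¹ := by
        rw [intervalIntegral.integral_const_mul]
        gcongr
        exact intervalIntegral.integral_mono_interval (by linarith) hδpq (by linarith)
          (Eventually.of_forall fun z => inv_nonneg.2 (Real.sqrt_nonneg _)) hinv

lemma intervalIntegrable_sqrtTaylorRemainder (hW : NondegenerateWell u A B p q c)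
    (hu : Continuous u) (hw : Continuous w) (t : ℝ) :
    IntervalIntegrable (fun z => sqrtTaylorRemainder (u z) (t * w z)) volume A B := by
  simp_rw [sqrtTaylorRemainder_mul_eq]
  exact (((by fun_prop : Continuous fun z => √(u z - t * w z)).intervalIntegrable _ _).sub
    ((by fun_prop : Continuous fun z => √(u z)).intervalIntegrable _ _)).add
    ((hW.intervalIntegrable_div_sqrt hu hw).const_mul _)

lemma abs_integral_sqrtTaylorRemainder_le_windows (hW : NondegenerateWell u A B p q c)
    (hu : Continuous u) (hw : Continuous w) {t ε δ : ℝ} (hε : ∀ z ∈ Icc A B, |t * w z| ≤ ε)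
    (hδ : 0 < δ) (hAδ : A ≤ p - δ) (hδpq : p + δ ≤ q - δ) (hδB : q + δ ≤ B)
    (hεδ : 2 * ε ≤ c * δ) :
    |∫ z in A..B, sqrtTaylorRemainder (u z) (t * w z)|
      ≤ 4 * δ * √ε + ε / 2 * ((∫ z in (p - δ)..(p + δ), (√(u z))⁻¹)
          + ∫ z in (q - δ)..(q + δ), (√(u z))⁻¹)
        + ε ^ 2 / (c * δ) * ∫ z in A..B, (√(u z))⁻¹ := by
  set R := fun z => sqrtTaylorRemainder (u z) (t * w z)
  have hR := hW.intervalIntegrable_sqrtTaylorRemainder hu hw t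
  have hε₀ : 0 ≤ ε := (abs_nonneg _).trans (hε A ⟨le_rfl, by linarith⟩)
  -- outside `(p - δ, q + δ)` the well is deeper than the perturbation, so `R` vanishes there
  have hout : ∀ z ∈ Icc A B, z ∉ Ioo (p - δ) (q + δ) → R z = 0 := fun z hz hzδ =>
    sqrtTaylorRemainder_eq_zero <|
      (hW.le_neg_mul_of_notMem hδ.le hz hzδ).trans (by linarith [hε z hz])
  have hsplit : ∫ z in A..B, R z = (∫ z in (p - δ)..(p + δ), R z)
      + (∫ z in (p + δ)..(q - δ), R z) + ∫ z in (q - δ)..(q + δ), R z := by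
    rw [← intervalIntegral.integral_eq_of_eq_zero_outside hAδ (by linarith) hδB hR
        (fun z hz => hout z ⟨hz.1, by linarith [hz.2]⟩ fun h => by linarith [h.1, hz.2])
        (fun z hz => hout z ⟨by linarith [hz.1], hz.2⟩ fun h => by linarith [h.2, hz.1]),
      intervalIntegral.integral_add_adjacent_intervals
        (hR.mono_Icc hAδ (by linarith) (by linarith))
        (hR.mono_Icc (by linarith) hδpq (by linarith)),
      intervalIntegral.integral_add_adjacent_intervals
        (hR.mono_Icc hAδ (by linarith) (by linarith)) (hR.mono_Icc (by linarith) (by linarith) hδB)]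
  have hp := hW.abs_integral_sqrtTaylorRemainder_le hu hε (a := p - δ) (b := p + δ) hAδ
    (by linarith) (by linarith)
  have hq := hW.abs_integral_sqrtTaylorRemainder_le hu hε (a := q - δ) (b := q + δ)
    (by linarith) (by linarith) hδB
  have hmid := hW.abs_integral_sqrtTaylorRemainder_le_of_deep hu hε hδ hAδ hδpq hδB hεδ
  rw [hsplit]
  refine (abs_add_three _ _ _).trans ?_
  linarith

lemma abs_integral_sqrt_sub_sub_le (hW : NondegenerateWell u A B p q c) (hu : Continuous u)
    (hw : Continuous w) {M t k : ℝ} (hM : ∀ z ∈ Icc A B, |w z| ≤ M) (hk : 0 < k)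
    (hkt : k ^ 4 = |t|) (hAk : A ≤ p - k ^ 3) (hkpq : p + k ^ 3 ≤ q - k ^ 3)
    (hkB : q + k ^ 3 ≤ B) (hkc : 2 * M * k ≤ c) :
    |(∫ z in A..B, √(u z - t * w z)) - (∫ z in A..B, √(u z))
        - t * (-(1 / 2) * ∫ z in p..q, w z / √(u z))|
      ≤ |t| * (4 * √M * k + M / 2 * ((∫ z in (p - k ^ 3)..(p + k ^ 3), (√(u z))⁻¹)
          + ∫ z in (q - k ^ 3)..(q + k ^ 3), (√(u z))⁻¹)
        + M ^ 2 * (∫ z in A..B, (√(u z))⁻¹) / c * k) := by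
  have hM₀ : 0 ≤ M := (abs_nonneg _).trans (hM A ⟨le_rfl, by linarith [pow_pos hk 3]⟩)
  have hε : ∀ z ∈ Icc A B, |t * w z| ≤ M * k ^ 4 := fun z hz => by
    rw [hkt, abs_mul, mul_comm M]
    exact mul_le_mul_of_nonneg_left (hM z hz) (abs_nonneg t)
  have hεδ : 2 * (M * k ^ 4) ≤ c * k ^ 3 := by
    have := mul_le_mul_of_nonneg_left hkc (pow_nonneg hk.le 3)
    linarith
  have hsqrt : √(M * k ^ 4) = √M * k ^ 2 := by
    rw [Real.sqrt_mul hM₀, show k ^ 4 = (k ^ 2) ^ 2 by ring, Real.sqrt_sq (by positivity)]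
  rw [← hW.integral_sqrtTaylorRemainder_eq hu hw, ← hkt]
  refine (hW.abs_integral_sqrtTaylorRemainder_le_windows hu hw hε (by positivity) hAk hkpq hkB
    hεδ).trans (le_of_eq ?_)
  rw [hsqrt]
  field_simp

theorem hasDerivAt_integral_sqrt (hW : NondegenerateWell u A B p q c) (hu : Continuous u)
    (hw : Continuous w) :
    HasDerivAt (fun t => ∫ z in A..B, √(u z - t * w z))
      (-(1 / 2) * ∫ z in p..q, w z / √(u z)) 0 := by
  obtain ⟨M, hM⟩ := isCompact_Icc.exists_bound_of_continuousOn (hw.continuousOn (s := Icc A B))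
  set I := fun δ => (∫ z in (p - δ)..(p + δ), (√(u z))⁻¹) + ∫ z in (q - δ)..(q + δ), (√(u z))⁻¹
  -- `k t = |t| ^ (1/4)`; windows of width `k t ^ 3` make every error term `o(t)`
  set k := fun t : ℝ => √(√|t|)
  have hk : Tendsto k (𝓝 0) (𝓝 0) := by
    simpa [k] using ((by fun_prop : Continuous k).tendsto 0)
  have hk3 : Tendsto (fun t => k t ^ 3) (𝓝 0) (𝓝 0) := by simpa using hk.pow 3
  have hI : Tendsto (fun t => I (k t ^ 3)) (𝓝 0) (𝓝 0) := by
    have hinv := hW.intervalIntegrable_inv_sqrt hu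
    have hI₀ : Tendsto I (𝓝 0) (𝓝 0) := by
      simpa using (hinv.tendsto_integral_sub_add ⟨hW.left_lt, hW.lt.trans hW.lt_right⟩).add
        (hinv.tendsto_integral_sub_add ⟨hW.left_lt.trans hW.lt, hW.lt_right⟩)
    exact hI₀.comp hk3
  have hkM : Tendsto (fun t => 2 * M * k t) (𝓝 0) (𝓝 0) := by simpa using hk.const_mul (2 * M)
  refine hasDerivAt_of_abs_sub_le (Φ := fun t => 4 * √M * k t + M / 2 * I (k t ^ 3)
    + M ^ 2 * (∫ z in A..B, (√(u z))⁻¹) / c * k t) ?_ ?_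
  · simpa using ((hk.const_mul (4 * √M)).add (hI.const_mul (M / 2))).add
      (hk.const_mul (M ^ 2 * (∫ z in A..B, (√(u z))⁻¹) / c))
  have := hW.left_lt; have := hW.lt; have := hW.lt_right
  filter_upwards [self_mem_nhdsWithin,
    nhdsWithin_le_nhds (hk3.eventually_lt_const (show (0 : ℝ) < p - A by linarith)),
    nhdsWithin_le_nhds (hk3.eventually_lt_const (show (0 : ℝ) < B - q by linarith)),
    nhdsWithin_le_nhds (hk3.eventually_lt_const (show (0 : ℝ) < (q - p) / 2 by linarith)),
    nhdsWithin_le_nhds (hkM.eventually_lt_const hW.slope_pos)] with t ht hkA hkB hkpq hkc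
  have hk4 : k t ^ 4 = |t| := by
    simp only [k, show (4 : ℕ) = 2 * 2 from rfl, pow_mul, Real.sq_sqrt (Real.sqrt_nonneg _),
      Real.sq_sqrt (abs_nonneg t)]
  simp only [zero_mul, sub_zero]
  exact hW.abs_integral_sqrt_sub_sub_le hu hw (fun z hz => by simpa using hM z hz)
    (Real.sqrt_pos.2 (Real.sqrt_pos.2 (abs_pos.2 ht))) hk4 (by linarith) (by linarith)
    (by linarith) hkc.le

lemma hasDerivAt_integral_sqrt_neg_add_mul {b₀ b₁ : ℝ → ℝ} {r : ℝ}
    (hb₀ : Continuous b₀) (hb₁ : Continuous b₁)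
    (hW : NondegenerateWell (fun z => -(b₀ z + r * b₁ z)) A B p q c) :
    HasDerivAt (fun s => ∫ z in A..B, √(-(b₀ z + s * b₁ z)))
      (-(1 / 2) * ∫ z in p..q, b₁ z / √(-(b₀ z + r * b₁ z))) r := by
  have h := HasDerivAt.comp_sub_const r r
    (by rw [sub_self]; exact hW.hasDerivAt_integral_sqrt (by fun_prop) hb₁)
  refine h.congr_of_eventuallyEq (Eventually.of_forall fun s =>
    intervalIntegral.integral_congr fun z _ => ?_)
  ring_nf

end NondegenerateWell

theorem stmt15_general (A B r₁ r₂ ε₀ : ℝ) (b₀ b₁ : ℝ → ℝ) (zm zp : ℝ → ℝ)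
    (hb₀ : ContDiff ℝ 2 b₀) (hb₁ : ContDiff ℝ 2 b₁) (hε₀ : 0 < ε₀)
    (hb₁lb : ∀ z ∈ Icc A B, ε₀ ≤ b₁ z)
    (hz : ∀ r ∈ Ioo r₁ r₂, A < zm r ∧ zm r < zp r ∧ zp r < B)
    (hneg : ∀ r ∈ Ioo r₁ r₂, ∀ z ∈ Ioo (zm r) (zp r), b₀ z + r * b₁ z < 0)
    (hzero : ∀ r ∈ Ioo r₁ r₂,
      b₀ (zm r) + r * b₁ (zm r) = 0 ∧ b₀ (zp r) + r * b₁ (zp r) = 0)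
    (hpos : ∀ r ∈ Ioo r₁ r₂, ∀ z ∈ Icc A B,
      z ∉ Icc (zm r) (zp r) → 0 < b₀ z + r * b₁ z)
    (hsimple : ∀ r ∈ Ioo r₁ r₂,
      deriv (fun z => b₀ z + r * b₁ z) (zm r) ≠ 0 ∧
      deriv (fun z => b₀ z + r * b₁ z) (zp r) ≠ 0) :
    (∀ r ∈ Ioo r₁ r₂,
      HasDerivAt (fun s => ∫ z in (zm s)..(zp s), Real.sqrt (-(b₀ z + s * b₁ z)))
        (-(1 / 2) * ∫ z in (zm r)..(zp r),
          b₁ z / Real.sqrt (-(b₀ z + r * b₁ z))) r) ∧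
    StrictAntiOn (fun s => ∫ z in (zm s)..(zp s), Real.sqrt (-(b₀ z + s * b₁ z)))
      (Ioo r₁ r₂) := by
  have hf : ∀ r, Differentiable ℝ fun z => b₀ z + r * b₁ z := fun r =>
    (hb₀.differentiable two_ne_zero).add ((hb₁.differentiable two_ne_zero).const_mul r)
  have hwell : ∀ r ∈ Ioo r₁ r₂,
      ∃ c, NondegenerateWell (fun z => -(b₀ z + r * b₁ z)) A B (zm r) (zp r) c := fun r hr =>
    NondegenerateWell.of_simple_zeros (hf r).continuous (hz r hr).1 (hz r hr).2.1 (hz r hr).2.2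
      (hf r _).hasDerivAt (hf r _).hasDerivAt (hsimple r hr).1 (hsimple r hr).2
      (hzero r hr).1 (hzero r hr).2 (hneg r hr) (hpos r hr)
  have hderiv : ∀ r ∈ Ioo r₁ r₂, HasDerivAt
      (fun s => ∫ z in (zm s)..(zp s), √(-(b₀ z + s * b₁ z)))
      (-(1 / 2) * ∫ z in (zm r)..(zp r), b₁ z / √(-(b₀ z + r * b₁ z))) r ∧
      0 < ∫ z in (zm r)..(zp r), b₁ z / √(-(b₀ z + r * b₁ z)) := fun r hr => by
    obtain ⟨c, hW⟩ := hwell r hr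
    refine ⟨(hW.hasDerivAt_integral_sqrt_neg_add_mul hb₀.continuous
      hb₁.continuous).congr_of_eventuallyEq ?_, hW.integral_div_sqrt_pos (by fun_prop) hb₁.continuous fun z hz =>
        hε₀.trans_le (hb₁lb z ⟨hW.left_lt.le.trans hz.1.le, hz.2.le.trans hW.lt_right.le⟩)⟩
    filter_upwards [Ioo_mem_nhds hr.1 hr.2] with s hs
    obtain ⟨c', hW'⟩ := hwell s hs
    exact hW'.integral_eq_of_nonpos_imp_eq_zero
      ((by fun_prop : Continuous fun z => √(-(b₀ z + s * b₁ z))).intervalIntegrable _ _)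
      fun z => Real.sqrt_eq_zero'.2
  refine ⟨fun r hr => (hderiv r hr).1, strictAntiOn_of_deriv_neg (convex_Ioo r₁ r₂)
    (fun r hr => (hderiv r hr).1.continuousAt.continuousWithinAt) fun r hr => ?_⟩
  rw [interior_Ioo] at hr
  rw [(hderiv r hr).1.deriv]
  linarith [(hderiv r hr).2]

/-- Let `b₀, b₁` be C² with `b₁ ≥ ε₀ > 0` on `[A,B]`, and for each
parameter `r` in an interval let `z⁻(r) < z⁺(r)` be the two simple zeros of
`z ↦ b₀(z) + r b₁(z)`, between which it is negative (and positive elsewhere on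
`[A,B]`). Then the action `η(r) = ∫_{z⁻(r)}^{z⁺(r)} (-b₀ - rb₁)^{1/2} dz` is
differentiable with `η'(r) = -½∫_{z⁻}^{z⁺} b₁·(-b₀-rb₁)^{-1/2} dz`, and `η` is
strictly decreasing. -/
theorem stmt15 (A B r₁ r₂ ε₀ : ℝ) (b₀ b₁ : ℝ → ℝ) (zm zp : ℝ → ℝ)
    (hb₀ : ContDiff ℝ 2 b₀) (hb₁ : ContDiff ℝ 2 b₁) (hε₀ : 0 < ε₀)
    (hb₁lb : ∀ z ∈ Icc A B, ε₀ ≤ b₁ z)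
    (hr : r₁ < r₂)
    (hz : ∀ r ∈ Ioo r₁ r₂, A < zm r ∧ zm r < zp r ∧ zp r < B)
    (hneg : ∀ r ∈ Ioo r₁ r₂, ∀ z ∈ Ioo (zm r) (zp r), b₀ z + r * b₁ z < 0)
    (hzero : ∀ r ∈ Ioo r₁ r₂,
      b₀ (zm r) + r * b₁ (zm r) = 0 ∧ b₀ (zp r) + r * b₁ (zp r) = 0)
    (hpos : ∀ r ∈ Ioo r₁ r₂, ∀ z ∈ Icc A B,
      z ∉ Icc (zm r) (zp r) → 0 < b₀ z + r * b₁ z)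
    (hsimple : ∀ r ∈ Ioo r₁ r₂,
      deriv (fun z => b₀ z + r * b₁ z) (zm r) ≠ 0 ∧
      deriv (fun z => b₀ z + r * b₁ z) (zp r) ≠ 0) :
    (∀ r ∈ Ioo r₁ r₂,
      HasDerivAt (fun s => ∫ z in (zm s)..(zp s), Real.sqrt (-(b₀ z + s * b₁ z)))
        (-(1 / 2) * ∫ z in (zm r)..(zp r),
          b₁ z / Real.sqrt (-(b₀ z + r * b₁ z))) r) ∧
    StrictAntiOn (fun s => ∫ z in (zm s)..(zp s), Real.sqrt (-(b₀ z + s * b₁ z)))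
      (Ioo r₁ r₂) :=
  stmt15_general A B r₁ r₂ ε₀ b₀ b₁ zm zp hb₀ hb₁ hε₀ hb₁lb hz hneg hzero hpos hsimple
end

section
/- Let f: ℝ² → ℝ be C² on a neighborhood of a compact set K, and suppose the non-degeneracy condition: for every x ∈ K, |∇f(x)| ≤ ε implies |det Hess f(x)| ≥ ε. Then there exists C such that for all γ ∈ (0, ε]: mes({x ∈ K : |∇f(x)| ≤ γ}) ≤ Cγ². -/
/-!
Where `‖∇f‖ ≤ ε` on `K` the Hessian, i.e. the Jacobian of `∇f : ℝ² → ℝ²`, is invertible, so by the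
inverse function theorem `∇f` is injective on a neighbourhood of each such point, and compactness
leaves finitely many neighbourhoods, say `N`. On each of them the change of variables formula and
`|det Hess f| ≥ ε` give `ε · mes(S ∩ V) ≤ mes(∇f(S))` for `S = {x ∈ K | ‖∇f x‖ ≤ γ}`, and `∇f` maps
`S` into the disc of radius `γ`. Summing, `mes(S) ≤ N π γ² / ε`.
-/

open Set

/-- The Hessian matrix of `f` at `x` in the standard basis of `ℝ²`. -/
noncomputable def hess2 (f : EuclideanSpace ℝ (Fin 2) → ℝ)
    (x : EuclideanSpace ℝ (Fin 2)) : Matrix (Fin 2) (Fin 2) ℝ :=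
  fun i j => fderiv ℝ (fun y => fderiv ℝ f y (EuclideanSpace.single j 1)) x
    (EuclideanSpace.single i 1)

open MeasureTheory Metric

section LocalDiffeomorphism

variable {E : Type*} [NormedAddCommGroup E] [NormedSpace ℝ E] [FiniteDimensional ℝ E]
  {g : E → E} {g' : E → E →L[ℝ] E}

theorem HasStrictFDerivAt.exists_isOpen_injOn_of_det_ne_zero {x : E}
    (hg : HasStrictFDerivAt g (g' x) x) (hdet : (g' x).det ≠ 0) :
    ∃ V : Set E, IsOpen V ∧ x ∈ V ∧ InjOn g V := by
  let e : E ≃L[ℝ] E := (LinearMap.equivOfDetNeZero _ hdet).toContinuousLinearEquiv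
  have he : HasStrictFDerivAt g (e : E →L[ℝ] E) x := hg
  exact ⟨he.toOpenPartialHomeomorph g |>.source, (he.toOpenPartialHomeomorph g).open_source,
    he.mem_toOpenPartialHomeomorph_source, (he.toOpenPartialHomeomorph g).injOn⟩

variable [MeasurableSpace E] [BorelSpace E] (μ : Measure E) [μ.IsAddHaarMeasure]

theorem ofReal_mul_measure_le_measure_image_of_le_abs_det {s : Set E} {c : ℝ}
    (hs : MeasurableSet s) (hg : ∀ x ∈ s, HasFDerivWithinAt g (g' x) s x)
    (hinj : InjOn g s) (hc : ∀ x ∈ s, c ≤ |(g' x).det|) :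
    ENNReal.ofReal c * μ s ≤ μ (g '' s) :=
  calc ENNReal.ofReal c * μ s = ∫⁻ _ in s, ENNReal.ofReal c ∂μ := (setLIntegral_const _ _).symm
    _ ≤ ∫⁻ x in s, ENNReal.ofReal |(g' x).det| ∂μ :=
      setLIntegral_mono_ae' hs (.of_forall fun x hx => ENNReal.ofReal_le_ofReal (hc x hx))
    _ = μ (g '' s) := lintegral_abs_det_fderiv_eq_addHaar_image μ hs hg hinj

/-- Compactness bounds the multiplicity of a local diffeomorphism on `A` by some `N`. -/
theorem exists_ofReal_mul_measure_le_mul_measure_image {A : Set E} {c : ℝ} (hA : IsCompact A)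
    (hg : ∀ x ∈ A, HasStrictFDerivAt g (g' x) x) (hc₀ : 0 < c)
    (hc : ∀ x ∈ A, c ≤ |(g' x).det|) :
    ∃ N : ℕ, ∀ s ⊆ A, MeasurableSet s → ENNReal.ofReal c * μ s ≤ N * μ (g '' s) := by
  have hloc (x) (hx : x ∈ A) : ∃ V : Set E, IsOpen V ∧ x ∈ V ∧ InjOn g V :=
    (hg x hx).exists_isOpen_injOn_of_det_ne_zero (abs_pos.1 (hc₀.trans_le (hc x hx)))
  choose! V hVopen hxV hVinj using hloc
  obtain ⟨t, htA, hcover⟩ := hA.elim_nhds_subcover V fun x hx => (hVopen x hx).mem_nhds (hxV x hx)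
  refine ⟨t.card, fun s hsA hs => ?_⟩
  have hpiece (x) (hx : x ∈ t) : ENNReal.ofReal c * μ (s ∩ V x) ≤ μ (g '' s) := by
    refine (ofReal_mul_measure_le_measure_image_of_le_abs_det μ
      (hs.inter (hVopen x (htA x hx)).measurableSet)
      (fun y hy => (hg y (hsA hy.1)).hasFDerivAt.hasFDerivWithinAt)
      ((hVinj x (htA x hx)).mono inter_subset_right) fun y hy => hc y (hsA hy.1)).trans ?_
    exact measure_mono (image_mono inter_subset_left)
  have hs_cover : s ⊆ ⋃ x ∈ t, s ∩ V x := fun y hy => by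
    simpa [hy] using hcover (hsA hy)
  calc ENNReal.ofReal c * μ s ≤ ENNReal.ofReal c * ∑ x ∈ t, μ (s ∩ V x) :=
        mul_le_mul_right ((measure_mono hs_cover).trans (measure_biUnion_finset_le t _)) _
    _ = ∑ x ∈ t, ENNReal.ofReal c * μ (s ∩ V x) := Finset.mul_sum _ _ _
    _ ≤ ∑ _x ∈ t, μ (g '' s) := Finset.sum_le_sum hpiece
    _ = t.card * μ (g '' s) := by rw [Finset.sum_const, nsmul_eq_mul]

end LocalDiffeomorphism

theorem IsClosed.sep_norm_le {α F : Type*} [TopologicalSpace α] [SeminormedAddCommGroup F]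
    {K : Set α} {h : α → F} (hK : IsClosed K) (hh : ContinuousOn h K) (r : ℝ) :
    IsClosed {x ∈ K | ‖h x‖ ≤ r} :=
  hh.norm.preimage_isClosed_of_isClosed hK isClosed_Iic

theorem EuclideanSpace.gradient_apply {ι : Type*} [Fintype ι] [DecidableEq ι]
    (f : EuclideanSpace ℝ ι → ℝ) (y : EuclideanSpace ℝ ι) (j : ι) :
    gradient f y j = fderiv ℝ f y (EuclideanSpace.single j 1) := by
  rw [← inner_gradient_left, EuclideanSpace.inner_single_right]
  simp

section Hessian

variable {f : EuclideanSpace ℝ (Fin 2) → ℝ} {x : EuclideanSpace ℝ (Fin 2)}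

theorem hess2_apply_eq_fderiv_gradient (hf : DifferentiableAt ℝ (gradient f) x) (i j : Fin 2) :
    hess2 f x i j = fderiv ℝ (gradient f) x (EuclideanSpace.single i 1) j := by
  have hcomp : (fun y => fderiv ℝ f y (EuclideanSpace.single j 1)) =
      EuclideanSpace.proj j ∘ gradient f := by
    funext y
    exact (EuclideanSpace.gradient_apply f y j).symm
  rw [hess2, hcomp, ((EuclideanSpace.proj j).hasFDerivAt.comp x hf.hasFDerivAt).fderiv]
  rfl

theorem det_fderiv_gradient_eq_det_hess2 (hf : DifferentiableAt ℝ (gradient f) x) :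
    (fderiv ℝ (gradient f) x).det = (hess2 f x).det := by
  let b := (EuclideanSpace.basisFun (Fin 2) ℝ).toBasis
  have hmat : LinearMap.toMatrix b b (fderiv ℝ (gradient f) x) = (hess2 f x).transpose := by
    ext i j
    simp [LinearMap.toMatrix_apply, b, hess2_apply_eq_fderiv_gradient hf]
  rw [ContinuousLinearMap.det, ← LinearMap.det_toMatrix b, hmat, Matrix.det_transpose]

end Hessian

/-- If `f` is C² near a compact set `K ⊆ ℝ²` and satisfies the
non-degeneracy condition `|∇f(x)| ≤ ε ⟹ |det Hess f(x)| ≥ ε` on `K`, then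
there is `C` with `mes({x ∈ K : |∇f(x)| ≤ γ}) ≤ Cγ²` for all `γ ∈ (0,ε]`. -/
theorem stmt18 (K U : Set (EuclideanSpace ℝ (Fin 2)))
    (f : EuclideanSpace ℝ (Fin 2) → ℝ) (ε : ℝ) (hε : 0 < ε)
    (hK : IsCompact K) (hU : IsOpen U) (hKU : K ⊆ U)
    (hf : ContDiffOn ℝ 2 f U)
    (hnd : ∀ x ∈ K, ‖fderiv ℝ f x‖ ≤ ε → ε ≤ |(hess2 f x).det|) :
    ∃ C : ℝ, ∀ γ : ℝ, 0 < γ → γ ≤ ε →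
      MeasureTheory.volume {x ∈ K | ‖fderiv ℝ f x‖ ≤ γ} ≤
        ENNReal.ofReal (C * γ ^ 2) := by
  have hdf : ContDiffOn ℝ 1 (fderiv ℝ f) U := hf.fderiv_of_isOpen hU (by norm_num)
  have hgrad : ContDiffOn ℝ 1 (gradient f) U :=
    (InnerProductSpace.toDual ℝ _).symm.contDiff.comp_contDiffOn hdf
  have hclosed (r : ℝ) : IsClosed {x ∈ K | ‖fderiv ℝ f x‖ ≤ r} :=
    hK.isClosed.sep_norm_le (hdf.continuousOn.mono hKU) r
  have hstrict (x) (hx : x ∈ K) : HasStrictFDerivAt (gradient f) (fderiv ℝ (gradient f) x) x :=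
    (hgrad.contDiffAt (hU.mem_nhds (hKU hx))).hasStrictFDerivAt one_ne_zero
  obtain ⟨N, hN⟩ := exists_ofReal_mul_measure_le_mul_measure_image volume
    (hK.of_isClosed_subset (hclosed ε) (sep_subset _ _)) (fun x hx => hstrict x hx.1) hε
    fun x hx => by
      rw [det_fderiv_gradient_eq_det_hess2 (hstrict x hx.1).differentiableAt]
      exact hnd x hx.1 hx.2
  refine ⟨N * Real.pi / ε, fun γ hγ hγε => ?_⟩
  have himage : gradient f '' {x ∈ K | ‖fderiv ℝ f x‖ ≤ γ} ⊆ closedBall 0 γ := by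
    rintro - ⟨x, hx, rfl⟩
    simpa [← InnerProductSpace.toDual_symm_apply, gradient] using hx.2
  have hmeasure := (hN _ (fun x hx => ⟨hx.1, hx.2.trans hγε⟩) (hclosed γ).measurableSet).trans
    (mul_le_mul_right (measure_mono himage) _)
  rw [div_mul_eq_mul_div, ENNReal.ofReal_div_of_pos hε,
    ENNReal.le_div_iff_mul_le (by simp [hε]) (by simp), mul_comm]
  refine hmeasure.trans_eq ?_
  rw [EuclideanSpace.volume_closedBall_fin_two, ENNReal.ofReal_mul (by positivity),
    ENNReal.ofReal_mul (by positivity), ENNReal.ofReal_natCast, ENNReal.ofReal_pow hγ.le]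
  ring
end

section
/- Let f: ℝ² → ℝ be C² on a neighborhood of a compact set K satisfying the intermediate non-degeneracy condition: |∇f(x)| ≤ ε implies ‖Hess f(x)‖ ≥ ε (some second derivative, i.e. the Hessian matrix norm, is bounded below). Then there exists C such that for all γ ∈ (0,ε]: mes({x ∈ K : |∇f(x)| ≤ γ}) ≤ Cγ. -/
open Set

/-!
Near a point of `K` where the gradient is large, the sublevel set `{‖∇f‖ ≤ γ}` is locally empty
for `γ ≤ ε`. Near a point where `|∂ᵢ∂ⱼ f| ≥ ε`, continuity of the Hessian keeps
`|∂ᵢ(∂ⱼ f)| ≥ ε / 2` on a small ball; since `|∂ⱼ f| ≤ γ` on the sublevel set, the mean value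
theorem shows that every line parallel to `eᵢ` meets it, inside the ball, in a set of diameter at
most `4γ / ε`, and Fubini bounds its measure there by `O(γ)`. Compactness of `K` turns these local
bounds into a global one.
-/

open Filter Topology MeasureTheory
open scoped NNReal ENNReal

theorem Convex.mul_abs_le_abs_sub_of_le_abs_fderiv_apply {E : Type*} [NormedAddCommGroup E]
    [NormedSpace ℝ E] {g : E → ℝ} {g' : E → StrongDual ℝ E} {s : Set E} (hs : Convex ℝ s)
    (hg : ∀ x ∈ s, HasFDerivWithinAt g (g' x) s x) {v : E} {c : ℝ}
    (hc : ∀ x ∈ s, c ≤ |g' x v|) {x : E} {t : ℝ} (hx : x ∈ s) (hxt : x + t • v ∈ s) :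
    c * |t| ≤ |g (x + t • v) - g x| := by
  obtain ⟨z, hz, hgz⟩ := domain_mvt hg hs hx hxt
  rw [hgz, add_sub_cancel_left, map_smul, smul_eq_mul, abs_mul, mul_comm |t|]
  exact mul_le_mul_of_nonneg_right (hc z (hs.segment_subset hx hxt hz)) (abs_nonneg t)

theorem Real.volume_le_ofReal_of_forall_abs_sub_le {s : Set ℝ} {d : ℝ}
    (h : ∀ a ∈ s, ∀ b ∈ s, |a - b| ≤ d) : volume s ≤ ENNReal.ofReal d :=
  (Real.volume_le_diam s).trans <| Metric.ediam_le fun a ha b hb => by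
    rw [edist_dist, Real.dist_eq]
    exact ENNReal.ofReal_le_ofReal (h a ha b hb)

theorem MeasureTheory.Measure.volume_prod_le_of_forall_abs_sub_le {β : Type*}
    [MeasurableSpace β] (ν : Measure β) [SFinite ν] {A : Set (ℝ × β)} (hA : MeasurableSet A)
    {s : Set β} (hAs : ∀ p ∈ A, p.2 ∈ s) {d : ℝ}
    (hslice : ∀ a b w, (a, w) ∈ A → (b, w) ∈ A → |a - b| ≤ d) :
    (volume.prod ν) A ≤ ENNReal.ofReal d * ν s := by
  rw [Measure.prod_apply_symm hA]
  refine (lintegral_mono fun w => ?_).trans (lintegral_indicator_const_le s _)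
  by_cases hw : w ∈ s
  · rw [indicator_of_mem hw]
    exact Real.volume_le_ofReal_of_forall_abs_sub_le fun a ha b hb => hslice a b w ha hb
  · have hempty : (fun a => (a, w)) ⁻¹' A = ∅ :=
      eq_empty_of_forall_notMem fun a ha => hw (hAs _ ha)
    rw [hempty, measure_empty]
    exact zero_le

namespace EuclideanSpace

theorem eq_add_smul_single_of_forall_ne {ι : Type*} [DecidableEq ι] {y z : EuclideanSpace ℝ ι}
    {i : ι} (h : ∀ k ≠ i, y k = z k) : z = y + (z i - y i) • EuclideanSpace.single i 1 := by
  ext k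
  by_cases hk : k = i
  · subst hk; simp
  · simp [hk, h k hk]

theorem volume_le_of_forall_abs_sub_coord_le {n : ℕ} {T : Set (EuclideanSpace ℝ (Fin (n + 1)))}
    (hT : MeasurableSet T) {x : EuclideanSpace ℝ (Fin (n + 1))} {r : ℝ} (hr : 0 < r)
    (hTx : T ⊆ Metric.ball x r) (i : Fin (n + 1)) {d : ℝ}
    (hslice : ∀ y ∈ T, ∀ z ∈ T, (∀ k ≠ i, y k = z k) → |y i - z i| ≤ d) :
    volume T ≤ ENNReal.ofReal d * ENNReal.ofReal ((2 * r) ^ n) := by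
  let e := (MeasurableEquiv.toLp 2 (Fin (n + 1) → ℝ)).symm.trans
    (MeasurableEquiv.piFinSuccAbove (fun _ => ℝ) i)
  have he : MeasurePreserving e volume volume :=
    (volume_preserving_piFinSuccAbove _ i).comp (volume_preserving_symm_measurableEquiv_toLp _)
  rw [← he.symm.measure_preimage hT.nullMeasurableSet, Measure.volume_eq_prod]
  have hball := Real.volume_pi_ball (fun j => x (i.succAbove j)) hr
  rw [Fintype.card_fin] at hball
  rw [← hball]
  refine Measure.volume_prod_le_of_forall_abs_sub_le _ (e.symm.measurable hT) ?_ ?_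
  · intro p hp
    refine (dist_pi_lt_iff hr).2 fun j => ?_
    simpa [e] using (PiLp.dist_apply_le (e.symm p) x (i.succAbove j)).trans_lt (hTx hp)
  · intro a b w ha hb
    have hab := hslice _ ha _ hb fun k hk => by
      obtain ⟨j, rfl⟩ := Fin.exists_succAbove_eq hk
      simp [e]
    simpa [e] using hab

theorem volume_le_of_le_abs_fderiv_single {n : ℕ}
    {g : EuclideanSpace ℝ (Fin (n + 1)) → ℝ} {x : EuclideanSpace ℝ (Fin (n + 1))} {r c γ : ℝ}
    (hr : 0 < r) (hc : 0 < c) (hg : DifferentiableOn ℝ g (Metric.ball x r)) (i : Fin (n + 1))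
    (hgi : ∀ y ∈ Metric.ball x r, c ≤ |fderiv ℝ g y (EuclideanSpace.single i 1)|)
    {T : Set (EuclideanSpace ℝ (Fin (n + 1)))} (hT : MeasurableSet T)
    (hTx : T ⊆ Metric.ball x r) (hTg : ∀ y ∈ T, |g y| ≤ γ) :
    volume T ≤ ENNReal.ofReal (2 * γ / c) * ENNReal.ofReal ((2 * r) ^ n) := by
  refine volume_le_of_forall_abs_sub_coord_le hT hr hTx i fun y hy z hz hyz => ?_
  have hzy := eq_add_smul_single_of_forall_ne hyz
  have hmvt := (convex_ball x r).mul_abs_le_abs_sub_of_le_abs_fderiv_apply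
    (fun w hw => (hg.differentiableAt (Metric.isOpen_ball.mem_nhds hw)).hasFDerivAt
      |>.hasFDerivWithinAt) hgi (hTx hy) (hzy ▸ hTx hz)
  rw [← hzy, abs_sub_comm] at hmvt
  rw [le_div_iff₀ hc, mul_comm]
  calc c * |y i - z i| ≤ |g z - g y| := hmvt
    _ ≤ |g z| + |g y| := abs_sub _ _
    _ ≤ 2 * γ := by linarith [hTg y hy, hTg z hz]

end EuclideanSpace

theorem IsCompact.exists_measure_inter_le_mul {X ι : Type*} [TopologicalSpace X]
    [MeasurableSpace X] {μ : Measure X} {K : Set X} (hK : IsCompact K) {S : ι → Set X}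
    {φ : ι → ℝ≥0∞} {Γ : Set ι}
    (hloc : ∀ x ∈ K, ∃ W ∈ 𝓝 x, ∃ C : ℝ≥0, ∀ a ∈ Γ, μ (W ∩ S a) ≤ C * φ a) :
    ∃ C : ℝ≥0, ∀ a ∈ Γ, μ (K ∩ S a) ≤ C * φ a := by
  choose W hW C hC using hloc
  obtain ⟨t, hcover⟩ := hK.elim_nhds_subcover' W hW
  refine ⟨∑ x ∈ t, C x.1 x.2, fun a ha => ?_⟩
  calc μ (K ∩ S a) ≤ μ (⋃ x ∈ t, W x.1 x.2 ∩ S a) := by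
        refine measure_mono fun y hy => ?_
        obtain ⟨x, hx, hyW⟩ := mem_iUnion₂.1 (hcover hy.1)
        exact mem_iUnion₂.2 ⟨x, hx, hyW, hy.2⟩
    _ ≤ ∑ x ∈ t, μ (W x.1 x.2 ∩ S a) := measure_biUnion_finset_le t _
    _ ≤ ∑ x ∈ t, C x.1 x.2 * φ a := Finset.sum_le_sum fun x _ => hC x.1 x.2 a ha
    _ = (∑ x ∈ t, C x.1 x.2 : ℝ≥0) * φ a := by push_cast; rw [Finset.sum_mul]

section Plane

variable {f : EuclideanSpace ℝ (Fin 2) → ℝ} {U : Set (EuclideanSpace ℝ (Fin 2))}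

theorem contDiffOn_fderiv_apply_single (hU : IsOpen U) (hf : ContDiffOn ℝ 2 f U) (j : Fin 2) :
    ContDiffOn ℝ 1 (fun y => fderiv ℝ f y (EuclideanSpace.single j 1)) U :=
  (hf.fderiv_of_isOpen hU (by norm_num)).clm_apply contDiffOn_const

theorem continuousOn_hess2 (hU : IsOpen U) (hf : ContDiffOn ℝ 2 f U) (i j : Fin 2) :
    ContinuousOn (fun y => hess2 f y i j) U :=
  ((contDiffOn_fderiv_apply_single hU hf j).continuousOn_fderiv_of_isOpen hU le_rfl).clm_apply
    continuousOn_const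

theorem volume_ball_inter_norm_fderiv_le (hU : IsOpen U) (hf : ContDiffOn ℝ 2 f U)
    {x : EuclideanSpace ℝ (Fin 2)} {r c : ℝ} (hr : 0 < r) (hc : 0 < c)
    (hxU : Metric.ball x r ⊆ U) {i j : Fin 2}
    (hH : ∀ y ∈ Metric.ball x r, c ≤ |hess2 f y i j|) (γ : ℝ) :
    volume (Metric.ball x r ∩ {y | ‖fderiv ℝ f y‖ ≤ γ}) ≤
      ENNReal.ofReal (2 * γ / c) * ENNReal.ofReal (2 * r) := by
  have hγ : MeasurableSet {y | ‖fderiv ℝ f y‖ ≤ γ} :=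
    measurableSet_le (measurable_fderiv ℝ f).norm measurable_const
  simpa using EuclideanSpace.volume_le_of_le_abs_fderiv_single (n := 1) hr hc
    (((contDiffOn_fderiv_apply_single hU hf j).differentiableOn one_ne_zero).mono hxU) i hH
    (Metric.isOpen_ball.measurableSet.inter hγ) inter_subset_left fun y hy =>
      ((fderiv ℝ f y).le_opNorm _).trans (by simpa using hy.2)

theorem exists_nhds_volume_inter_norm_fderiv_le (hU : IsOpen U) (hf : ContDiffOn ℝ 2 f U)
    {x : EuclideanSpace ℝ (Fin 2)} (hx : x ∈ U) {ε : ℝ} (hε : 0 < ε)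
    (hnd : ‖fderiv ℝ f x‖ ≤ ε → ∃ i j, ε ≤ |hess2 f x i j|) :
    ∃ W ∈ 𝓝 x, ∃ C : ℝ≥0, ∀ γ ∈ Iic ε,
      volume (W ∩ {y | ‖fderiv ℝ f y‖ ≤ γ}) ≤ C * ENNReal.ofReal γ := by
  by_cases hbig : ε < ‖fderiv ℝ f x‖
  · have hcont : ContinuousAt (fun y => ‖fderiv ℝ f y‖) x :=
      ((hf.continuousOn_fderiv_of_isOpen hU (by norm_num)).continuousAt (hU.mem_nhds hx)).norm
    refine ⟨_, hcont.eventually (lt_mem_nhds hbig), 0, fun γ hγ => ?_⟩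
    have hempty : {y | ε < ‖fderiv ℝ f y‖} ∩ {y | ‖fderiv ℝ f y‖ ≤ γ} = ∅ :=
      eq_empty_of_forall_notMem fun y hy => (hy.1.trans_le (hy.2.trans (mem_Iic.1 hγ))).false
    rw [hempty, measure_empty]
    exact zero_le
  · obtain ⟨i, j, hij⟩ := hnd (not_lt.1 hbig)
    have hH : ∀ᶠ y in 𝓝 x, ε / 2 < |hess2 f y i j| :=
      ((continuousOn_hess2 hU hf i j).continuousAt (hU.mem_nhds hx)).abs.eventually
        (lt_mem_nhds (by linarith))
    obtain ⟨r, hr, hrU⟩ := Metric.mem_nhds_iff.1 (inter_mem (hU.mem_nhds hx) hH)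
    refine ⟨_, Metric.ball_mem_nhds x hr, (8 * r / ε).toNNReal, fun γ _ => ?_⟩
    calc volume (Metric.ball x r ∩ {y | ‖fderiv ℝ f y‖ ≤ γ})
        ≤ ENNReal.ofReal (2 * γ / (ε / 2)) * ENNReal.ofReal (2 * r) :=
          volume_ball_inter_norm_fderiv_le hU hf hr (by positivity) (fun y hy => (hrU hy).1)
            (fun y hy => (hrU hy).2.le) γ
      _ = ENNReal.ofReal (8 * r / ε) * ENNReal.ofReal γ := by
          rw [← ENNReal.ofReal_mul' (by positivity), ← ENNReal.ofReal_mul (by positivity)]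
          congr 1
          field_simp
          ring

end Plane

/-- If `f` is C² near a compact set `K ⊆ ℝ²` and satisfies the
intermediate non-degeneracy condition: `|∇f(x)| ≤ ε` implies some second
derivative of `f` at `x` (entry of the Hessian matrix) is at least `ε` in
absolute value, then there is `C` with `mes({x ∈ K : |∇f(x)| ≤ γ}) ≤ Cγ` for
all `γ ∈ (0,ε]`. -/
theorem stmt19 (K U : Set (EuclideanSpace ℝ (Fin 2)))
    (f : EuclideanSpace ℝ (Fin 2) → ℝ) (ε : ℝ) (hε : 0 < ε)
    (hK : IsCompact K) (hU : IsOpen U) (hKU : K ⊆ U)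
    (hf : ContDiffOn ℝ 2 f U)
    (hnd : ∀ x ∈ K, ‖fderiv ℝ f x‖ ≤ ε → ∃ i j, ε ≤ |hess2 f x i j|) :
    ∃ C : ℝ, ∀ γ : ℝ, 0 < γ → γ ≤ ε →
      MeasureTheory.volume {x ∈ K | ‖fderiv ℝ f x‖ ≤ γ} ≤
        ENNReal.ofReal (C * γ) := by
  obtain ⟨C, hC⟩ := hK.exists_measure_inter_le_mul (μ := volume) fun x hx =>
    exists_nhds_volume_inter_norm_fderiv_le hU hf (hKU hx) hε (hnd x hx)
  refine ⟨C, fun γ _ hγε => ?_⟩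
  rw [ENNReal.ofReal_mul C.coe_nonneg, ENNReal.ofReal_coe_nnreal]
  exact hC γ hγε
end
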